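/- arXiv:2504.08574 — 2 statements merged into one kernel-verified Lean document; each statement's English description precedes it below -/
import Mathlib

section
/- Let R → S be a flat ring homomorphism of commutative rings with R reduced, and assume that for every prime ideal p of R the fiber ring S ⊗_R κ(p) is reduced (κ(p) the residue field of p). If S is flat over R and R is Noetherian, then S is reduced. -/
theorem stmt7 {R S : Type*} [CommRing R] [CommRing S] [Algebra R S]
    [IsNoetherianRing R] [IsReduced R] [Module.Flat R S]
    (hfib : ∀ (p : Ideal R) [p.IsPrime],
      IsReduced (TensorProduct R (IsLocalRing.ResidueField (Localization.AtPrime p)) S)) :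
    IsReduced S := by
  constructor
  intro x hx
  haveI : DecidableEq (minimalPrimes R) := Classical.decEq _
  haveI hfin : Fintype (minimalPrimes R) := (minimalPrimes.finite_of_isNoetherianRing R).fintype
  haveI hP : ∀ p : minimalPrimes R, p.1.IsPrime := fun p => p.2.1.1
  set κ : minimalPrimes R → Type _ :=
    fun p => IsLocalRing.ResidueField (Localization.AtPrime p.1) with hκ
  -- the diagonal map R →ₗ ∏ κ p is injective
  letI f : R →ₗ[R] (∀ p : minimalPrimes R, κ p) :=
    LinearMap.pi (fun p => Algebra.linearMap R (κ p))
  have hker : ∀ (p : minimalPrimes R) (r : R), algebraMap R (κ p) r = 0 ↔ r ∈ p.1 := by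
    intro p r
    rw [IsScalarTower.algebraMap_apply R (Localization.AtPrime p.1) (κ p) r]
    rw [show (algebraMap (Localization.AtPrime p.1) (κ p)) = IsLocalRing.residue _ from rfl]
    rw [IsLocalRing.residue_eq_zero_iff]
    exact IsLocalization.AtPrime.to_map_mem_maximal_iff (Localization.AtPrime p.1) p.1 r
  have hf : Function.Injective f := by
    intro a b hab
    rw [← sub_eq_zero]
    have h0 : ∀ p : minimalPrimes R, algebraMap R (κ p) (a - b) = 0 := by
      intro p
      have := congrFun hab p
      simp only [f, LinearMap.pi_apply, Algebra.linearMap_apply] at this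
      rw [map_sub, this, sub_self]
    have hnil : IsNilpotent (a - b) := by
      rw [nilpotent_iff_mem_prime]
      intro J hJ
      obtain ⟨p, hp, hple⟩ := Ideal.exists_minimalPrimes_le (I := ⊥) (J := J) bot_le
      exact hple ((hker ⟨p, hp⟩ (a - b)).mp (h0 ⟨p, hp⟩))
    exact IsReduced.eq_zero _ hnil
  -- tensoring with flat S
  have hg : Function.Injective (LinearMap.lTensor S f) :=
    Module.Flat.lTensor_preserves_injective_linearMap f hf
  have hcomp : Function.Injective (fun s : S =>
      (fun p => TensorProduct.comm R S (κ p)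
        (TensorProduct.piRight R R S κ (LinearMap.lTensor S f ((TensorProduct.rid R S).symm s)) p))) := by
    intro a b hab
    have h1 : TensorProduct.piRight R R S κ (LinearMap.lTensor S f ((TensorProduct.rid R S).symm a))
        = TensorProduct.piRight R R S κ (LinearMap.lTensor S f ((TensorProduct.rid R S).symm b)) := by
      funext p
      exact (TensorProduct.comm R S (κ p)).injective (congrFun hab p)
    exact (TensorProduct.rid R S).symm.injective (hg ((TensorProduct.piRight R R S κ).injective h1))
  have hval : ∀ (s : S) (p : minimalPrimes R),
      TensorProduct.comm R S (κ p)
        (TensorProduct.piRight R R S κ (LinearMap.lTensor S f ((TensorProduct.rid R S).symm s)) p)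
      = (Algebra.TensorProduct.includeRight : S →ₐ[R] TensorProduct R (κ p) S) s := by
    intro s p
    simp only [TensorProduct.rid_symm_apply, LinearMap.lTensor_tmul,
      TensorProduct.piRight_apply, TensorProduct.piRightHom_tmul,
      TensorProduct.comm_tmul, Algebra.TensorProduct.includeRight_apply]
    congr 1
    simp [f, Algebra.linearMap_apply, map_one]
  apply hcomp
  funext p
  simp only []
  rw [hval, hval]
  simp only [map_zero]
  haveI := hfib p.1
  exact IsReduced.eq_zero _ (hx.map (Algebra.TensorProduct.includeRight : S →ₐ[R] TensorProduct R (κ p) S))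
end

section
/- Let X be a topological space whose connected components are open, and let Y ⊆ X be a dense subset with the property that whenever Y = Y₁ ∪ Y₂ with Y₁, Y₂ disjoint and both clopen in Y, the closures cl(Y₁) and cl(Y₂) in X are disjoint. Then the map π₀(Y) → π₀(X) induced by the inclusion (sending a connected component of Y to the component of X containing it) is a bijection. -/
theorem stmt11 {X : Type*} [TopologicalSpace X]
    (hcomp : ∀ x : X, IsOpen (connectedComponent x))
    (Y : Set X) (hY : Dense Y)
    (hsep : ∀ Y₁ Y₂ : Set Y, IsClopen Y₁ → IsClopen Y₂ → Disjoint Y₁ Y₂ →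
      Y₁ ∪ Y₂ = Set.univ →
      Disjoint (closure (Subtype.val '' Y₁)) (closure (Subtype.val '' Y₂)))
    (g : ConnectedComponents Y → ConnectedComponents X)
    (hg : ∀ y : Y, g (ConnectedComponents.mk y) = ConnectedComponents.mk (y : X)) :
    Function.Bijective g := by
  constructor
  · intro a b hab
    obtain ⟨y₁, rfl⟩ := ConnectedComponents.surjective_coe a
    obtain ⟨y₂, rfl⟩ := ConnectedComponents.surjective_coe b
    rw [hg, hg, ConnectedComponents.coe_eq_coe'] at hab
    set C : Set X := connectedComponent (y₂ : X) with hC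
    have hCopen : IsOpen C := hcomp _
    have hCclosed : IsClosed C := isClosed_connectedComponent
    set S : Set Y := Subtype.val ⁻¹' C with hS
    have hSopen : IsOpen S := hCopen.preimage continuous_subtype_val
    have hSclosed : IsClosed S := hCclosed.preimage continuous_subtype_val
    have hpre : IsPreconnected S := by
      by_contra hnc
      rw [IsPreconnected] at hnc
      push_neg at hnc
      obtain ⟨u, v, hu, hv, hsub, hne1, hne2, hempty'⟩ := hnc
      have hempty : ∀ z, z ∉ S ∩ (u ∩ v) := Set.eq_empty_iff_forall_notMem.mp hempty'
      set A : Set Y := S ∩ u with hA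
      set B : Set Y := S ∩ v with hB
      have hAeq : A = S \ v := by
        ext z
        constructor
        · rintro ⟨hzS, hzu⟩
          refine ⟨hzS, fun hzv => hempty z ⟨ hzS, hzu, hzv⟩⟩
        · rintro ⟨hzS, hzv⟩
          rcases hsub hzS with h | h
          · exact ⟨hzS, h⟩
          · exact absurd h hzv
      have hBeq : B = S \ u := by
        ext z
        constructor
        · rintro ⟨hzS, hzv⟩
          refine ⟨hzS, fun hzu => hempty z ⟨ hzS, hzu, hzv⟩⟩
        · rintro ⟨hzS, hzu⟩
          rcases hsub hzS with h | h
          · exact absurd h hzu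
          · exact ⟨hzS, h⟩
      have hAclopen : IsClopen A :=
        ⟨hAeq ▸ hSclosed.sdiff hv, hSopen.inter hu⟩
      have hBclopen : IsClopen B :=
        ⟨hBeq ▸ hSclosed.sdiff hu, hSopen.inter hv⟩
      have hScclopen : IsClopen (Sᶜ) := ⟨hSopen.isClosed_compl, hSclosed.isOpen_compl⟩
      have h2clopen : IsClopen (B ∪ Sᶜ) := hBclopen.union hScclopen
      have hdisj : Disjoint A (B ∪ Sᶜ) := by
        rw [Set.disjoint_union_right]
        constructor
        · rw [Set.disjoint_left]
          rintro z ⟨hzS, hzu⟩ ⟨_, hzv⟩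
          exact hempty z ⟨ hzS, hzu, hzv⟩
        · rw [Set.disjoint_left]
          rintro z ⟨hzS, _⟩ hz
          exact hz hzS
      have huniv : A ∪ (B ∪ Sᶜ) = Set.univ := by
        have hABS : A ∪ B = S := by
          apply Set.Subset.antisymm
          · rintro z (⟨h, _⟩ | ⟨h, _⟩) <;> exact h
          · intro z hz
            rcases hsub hz with h | h
            · exact Or.inl ⟨hz, h⟩
            · exact Or.inr ⟨hz, h⟩
        rw [← Set.union_assoc, hABS, Set.union_compl_self]
      have hd := hsep A (B ∪ Sᶜ) hAclopen h2clopen hdisj huniv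
      -- C is connected but split by the two closures
      have hCsub : C ⊆ closure (Subtype.val '' A) ∪ closure (Subtype.val '' (B ∪ Sᶜ)) := by
        intro x hx
        have hx1 : x ∈ closure (C ∩ Y) := hY.open_subset_closure_inter hCopen hx
        have himg : C ∩ Y ⊆ Subtype.val '' A ∪ Subtype.val '' (B ∪ Sᶜ) := by
          rintro z ⟨hzC, hzY⟩
          have hzS : (⟨z, hzY⟩ : Y) ∈ S := hzC
          rcases hsub hzS with h | h
          · exact Or.inl ⟨⟨z, hzY⟩, ⟨hzS, h⟩, rfl⟩
          · exact Or.inr ⟨⟨z, hzY⟩, Or.inl ⟨hzS, h⟩, rfl⟩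
        have := closure_mono himg hx1
        rwa [closure_union] at this
      have hne1' : (C ∩ closure (Subtype.val '' A)).Nonempty := by
        obtain ⟨a, haS, hau⟩ := hne1
        exact ⟨(a : X), haS, subset_closure ⟨a, ⟨haS, hau⟩, rfl⟩⟩
      have hne2' : (C ∩ closure (Subtype.val '' (B ∪ Sᶜ))).Nonempty := by
        obtain ⟨b, hbS, hbv⟩ := hne2
        exact ⟨(b : X), hbS, subset_closure ⟨b, Or.inl ⟨hbS, hbv⟩, rfl⟩⟩
      have := isPreconnected_closed_iff.mp isPreconnected_connectedComponent
        (closure (Subtype.val '' A)) (closure (Subtype.val '' (B ∪ Sᶜ)))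
        isClosed_closure isClosed_closure hCsub hne1' hne2'
      obtain ⟨x, _, hx1, hx2⟩ := this
      exact hd.ne_of_mem hx1 hx2 rfl
    have hy₁S : y₁ ∈ S := hab
    have hy₂S : y₂ ∈ S := mem_connectedComponent
    have := hpre.subset_connectedComponent hy₂S hy₁S
    exact (ConnectedComponents.coe_eq_coe'.mpr this)
  · intro c
    obtain ⟨x, rfl⟩ := ConnectedComponents.surjective_coe c
    obtain ⟨y, hyY, hyC⟩ := hY.exists_mem_open (hcomp x) ⟨x, mem_connectedComponent⟩
    exact ⟨ConnectedComponents.mk ⟨y, hyY⟩, by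
      rw [hg]; exact ConnectedComponents.coe_eq_coe'.mpr hyC⟩
end
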